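/- Orient each edge e of a finite tree T from the component of T − e with smaller total vertex weight toward the component with larger total weight (breaking ties arbitrarily but consistently). Then there exists a unique vertex v of T at which all incident edges are oriented inwards. -/

import Mathlib

/-!
The `u`-side of an edge `uv` of a forest grows strictly along a path: if `a - b - c` is a path,
the `a`-side of `ab` is a proper subset of the `b`-side of `bc`. Hence if `u → v` points to the
heavier side, every other edge at `u` points into `u`, and following arrows from any vertex
ends at a sink. Two sinks `v ≠ y` are impossible: if `a` is the neighbour of `v` towards `y`,
then `a → v`, so every edge on the light side of `av` points towards `v`; in particular the
last edge of the path from `v` to `y` points away from `y`.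
-/

open scoped Classical in
/-- The weight of the component containing `u` after deleting edge `s(u,v)`. -/
noncomputable def sideWeightR {V : Type*} [Fintype V] (G : SimpleGraph V)
    (w : V → ℝ) (u v : V) : ℝ :=
  ∑ x ∈ Finset.univ.filter
      (fun x => (G.deleteEdges {s(u, v)}).Reachable u x), w x

namespace SimpleGraph

variable {V : Type*} {G : SimpleGraph V}

theorem exists_adj_reachable_deleteEdges {H : SimpleGraph V} (hHG : H ≤ G) {u x : V}
    (h : H.Reachable u x) (hux : u ≠ x) :
    ∃ y, H.Adj u y ∧ (G.deleteEdges {s(y, u)}).Reachable y x := by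
  classical
  obtain ⟨p, hp⟩ := h.some.toPath
  cases p with
  | nil => exact absurd rfl hux
  | cons hadj q =>
    have hu : u ∉ q.support := ((Walk.cons_isPath_iff _ _).mp hp).2
    refine ⟨_, hadj, ⟨(q.mapLe hHG).toDeleteEdge _ fun he => hu ?_⟩⟩
    simpa using Walk.snd_mem_support_of_mem_edges _ he

variable [Fintype V]

open scoped Classical in
noncomputable def edgeSide (G : SimpleGraph V) (u v : V) : Finset V :=
  {x | (G.deleteEdges {s(u, v)}).Reachable u x}

variable {u v a b c x : V}

theorem mem_edgeSide : x ∈ G.edgeSide u v ↔ (G.deleteEdges {s(u, v)}).Reachable u x := by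
  simp [edgeSide]

theorem self_mem_edgeSide (u v : V) : u ∈ G.edgeSide u v :=
  mem_edgeSide.mpr (Reachable.refl u)

theorem sideWeightR_eq_sum_edgeSide (w : V → ℝ) (u v : V) :
    sideWeightR G w u v = ∑ x ∈ G.edgeSide u v, w x :=
  rfl

theorem IsAcyclic.notMem_edgeSide (hG : G.IsAcyclic) (h : G.Adj u v) :
    v ∉ G.edgeSide u v :=
  fun hv => isAcyclic_iff_forall_adj_isBridge.mp hG h (mem_edgeSide.mp hv)

theorem IsAcyclic.edgeSide_subset (hG : G.IsAcyclic) (hab : G.Adj a b) (hac : a ≠ c) :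
    G.edgeSide a b ⊆ G.edgeSide b c := by
  classical
  intro x hx
  obtain ⟨p⟩ := mem_edgeSide.mp hx
  have hb : b ∉ p.support := fun hb =>
    hG.notMem_edgeSide hab (mem_edgeSide.mpr ⟨p.takeUntil b hb⟩)
  have hax : (G.deleteEdges {s(b, c)}).Reachable a x :=
    ⟨(p.mapLe (deleteEdges_le _)).toDeleteEdge _ fun he =>
      hb (by simpa using Walk.fst_mem_support_of_mem_edges _ he)⟩
  have hba : (G.deleteEdges {s(b, c)}).Adj b a :=
    deleteEdges_adj.mpr ⟨hab.symm, by rwa [Set.mem_singleton_iff, Sym2.congr_right]⟩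
  exact mem_edgeSide.mpr (hba.reachable.trans hax)

theorem IsAcyclic.card_edgeSide_lt (hG : G.IsAcyclic) (hab : G.Adj a b) (hac : a ≠ c) :
    (G.edgeSide a b).card < (G.edgeSide b c).card :=
  Finset.card_lt_card ⟨hG.edgeSide_subset hab hac,
    fun h => hG.notMem_edgeSide hab (h (self_mem_edgeSide b c))⟩

theorem IsAcyclic.sideWeightR_le {w : V → ℝ} (hG : G.IsAcyclic) (hw : ∀ x, 0 ≤ w x)
    (hab : G.Adj a b) (hac : a ≠ c) :
    sideWeightR G w a b ≤ sideWeightR G w b c := by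
  simpa only [sideWeightR_eq_sum_edgeSide] using
    Finset.sum_le_sum_of_subset_of_nonneg (hG.edgeSide_subset hab hac) fun x _ _ => hw x

theorem IsAcyclic.sideWeightR_lt_of_adj {w : V → ℝ} (hG : G.IsAcyclic) (hw : ∀ x, 0 ≤ w x)
    (hxu : G.Adj x u) (huv : G.Adj u v) (hxv : x ≠ v)
    (h : sideWeightR G w u v < sideWeightR G w v u) :
    sideWeightR G w x u < sideWeightR G w u x :=
  calc sideWeightR G w x u ≤ sideWeightR G w u v := hG.sideWeightR_le hw hxu hxv
    _ < sideWeightR G w v u := h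
    _ ≤ sideWeightR G w u x := hG.sideWeightR_le hw huv.symm hxv.symm

/-- The inequality `sideWeightR G w u v < sideWeightR G w v u` encodes the orientation `u → v`. -/
def IsSink (G : SimpleGraph V) (w : V → ℝ) (v : V) : Prop :=
  ∀ u, G.Adj u v → sideWeightR G w u v < sideWeightR G w v u

theorem IsAcyclic.not_isSink_of_mem_edgeSide {w : V → ℝ} {u v x : V} (hG : G.IsAcyclic)
    (hw : ∀ x, 0 ≤ w x) (huv : G.Adj u v) (h : sideWeightR G w u v < sideWeightR G w v u)
    (hx : x ∈ G.edgeSide u v) : ¬ G.IsSink w x := by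
  intro hsink
  by_cases hxu : x = u
  · subst hxu
    exact (hsink v huv.symm).asymm h
  obtain ⟨y, huy, hyx⟩ :=
    exists_adj_reachable_deleteEdges (deleteEdges_le _) (mem_edgeSide.mp hx) (Ne.symm hxu)
  have hyv : y ≠ v := by
    rintro rfl
    simp at huy
  have hGuy : G.Adj u y := (deleteEdges_adj.mp huy).1
  exact hG.not_isSink_of_mem_edgeSide hw hGuy.symm
    (hG.sideWeightR_lt_of_adj hw hGuy.symm huv hyv h) (mem_edgeSide.mpr hyx) hsink
termination_by (G.edgeSide u v).card
decreasing_by exact hG.card_edgeSide_lt hGuy.symm hyv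

theorem exists_lt_of_not_isSink {w : V → ℝ}
    (hties : ∀ u v, G.Adj u v → sideWeightR G w u v ≠ sideWeightR G w v u)
    (hv : ¬ G.IsSink w v) : ∃ z, G.Adj v z ∧ sideWeightR G w v z < sideWeightR G w z v := by
  obtain ⟨z, hzv, hnot⟩ : ∃ z, G.Adj z v ∧ ¬ sideWeightR G w z v < sideWeightR G w v z := by
    simpa [IsSink] using hv
  exact ⟨z, hzv.symm, lt_of_le_of_ne (not_lt.mp hnot) (hties v z hzv.symm)⟩

theorem IsAcyclic.exists_isSink_of_lt {w : V → ℝ} {u v : V} (hG : G.IsAcyclic)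
    (hties : ∀ u v, G.Adj u v → sideWeightR G w u v ≠ sideWeightR G w v u)
    (huv : G.Adj u v) (h : sideWeightR G w u v < sideWeightR G w v u) :
    ∃ x, G.IsSink w x := by
  by_cases hv : G.IsSink w v
  · exact ⟨v, hv⟩
  obtain ⟨z, hvz, hlt⟩ := exists_lt_of_not_isSink hties hv
  have hzu : z ≠ u := by
    rintro rfl
    exact hlt.asymm h
  exact hG.exists_isSink_of_lt hties hvz hlt
termination_by (G.edgeSide v u).card
decreasing_by exact hG.card_edgeSide_lt hvz.symm hzu

theorem IsTree.existsUnique_isSink {w : V → ℝ} (hT : G.IsTree) (hw : ∀ x, 0 ≤ w x)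
    (hties : ∀ u v, G.Adj u v → sideWeightR G w u v ≠ sideWeightR G w v u) :
    ∃! v, G.IsSink w v := by
  obtain ⟨v, hv⟩ : ∃ v, G.IsSink w v := by
    obtain ⟨v⟩ := hT.connected.nonempty
    by_cases hv : G.IsSink w v
    · exact ⟨v, hv⟩
    obtain ⟨z, hvz, hlt⟩ := exists_lt_of_not_isSink hties hv
    exact hT.isAcyclic.exists_isSink_of_lt hties hvz hlt
  refine ⟨v, hv, fun y hy => by_contra fun hyv => ?_⟩
  obtain ⟨a, hva, hay⟩ :=
    exists_adj_reachable_deleteEdges le_rfl (hT.connected v y) (Ne.symm hyv)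
  exact hT.isAcyclic.not_isSink_of_mem_edgeSide hw hva.symm (hv a hva.symm)
    (mem_edgeSide.mpr hay) hy

end SimpleGraph

theorem stmt_6_general {V : Type*} [Fintype V] (G : SimpleGraph V)
    (hT : G.IsTree)
    (o : V → V → Prop)
    (w' : V → ℝ) (hw' : ∀ v, 0 ≤ w' v)
    (hties : ∀ u v, G.Adj u v → sideWeightR G w' u v ≠ sideWeightR G w' v u)
    (ho : ∀ u v, G.Adj u v →
      (o u v ↔ sideWeightR G w' u v < sideWeightR G w' v u)) :
    ∃! v : V, ∀ u, G.Adj u v → o u v := by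
  have hsink : ∀ v, (∀ u, G.Adj u v → o u v) ↔ G.IsSink w' v :=
    fun v => forall₂_congr fun u h => ho u v h
  simpa only [hsink] using hT.existsUnique_isSink hw' hties

/-- Orient each edge of a finite weighted tree from its lighter side to its
heavier side, breaking ties consistently (via a fixed tie-free nonnegative
perturbation `w'` of the weights).  Then there is a unique vertex all of whose
incident edges are oriented inwards. -/
theorem stmt_6 {V : Type*} [Fintype V] (G : SimpleGraph V)
    (hT : G.IsTree) (w : V → ℝ) (hw : ∀ v, 0 ≤ w v)
    (o : V → V → Prop)
    (w' : V → ℝ) (hw' : ∀ v, 0 ≤ w' v)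
    (hcons : ∀ u v, G.Adj u v → sideWeightR G w u v < sideWeightR G w v u →
      sideWeightR G w' u v < sideWeightR G w' v u)
    (hties : ∀ u v, G.Adj u v → sideWeightR G w' u v ≠ sideWeightR G w' v u)
    (ho : ∀ u v, G.Adj u v →
      (o u v ↔ sideWeightR G w' u v < sideWeightR G w' v u)) :
    ∃! v : V, ∀ u, G.Adj u v → o u v :=
  stmt_6_general G hT o w' hw' hties ho
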